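/- arXiv:2003.00890 — 6 statements merged into one kernel-verified Lean document; each statement's English description precedes it below -/
import Mathlib

section
/- Let (Ω,μ) be a probability space and F₁,...,F_ℓ : Ω → {0,1} random variables such that there exists ρ ∈ (0,1) with the property that for every j, the conditional probability that F_j = 1 given F₁,...,F_{j-1} is at least ρ. Let G₁,...,G_ℓ : Ω → {0,1} be independent random variables with μ(G_i = 1) = ρ. Then for all r, μ({ω : Σ_{i=1}^ℓ F_i(ω) ≤ r}) ≤ μ({ω : Σ_{i=1}^ℓ G_i(ω) ≤ r}). -/
open MeasureTheory ProbabilityTheory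
open scoped ENNReal

/-!
Write `S n` for the sum of the first `n` of the `F j`. Splitting `{S (n+1) ≤ s}` according to
the value of the next variable, it is `{S n ≤ s}` minus those points of the boundary
`{S n ≤ s} \ {S n ≤ s - 1}` where the next variable is `1`. The boundary lies in the past
σ-algebra, so the conditional bound removes at least a `ρ`-fraction of it, giving
`μ (S (n+1) ≤ s) ≤ (1 - ρ) μ (S n ≤ s) + ρ μ (S n ≤ s - 1)`. By induction `μ (S n ≤ s)` is at
most the CDF of `Bin(n, ρ)`, while for independent `G i` the same recursion holds with equality.
-/

/-- `binomialCDF p n r` is the probability that `Bin(n, p) ≤ r`, by conditioning on the last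
trial. -/
noncomputable def binomialCDF (p : ℝ≥0∞) : ℕ → ℝ → ℝ≥0∞
  | 0, r => if 0 ≤ r then 1 else 0
  | n + 1, r => (1 - p) * binomialCDF p n r + p * binomialCDF p n (r - 1)

section SublevelSets

variable {Ω : Type*}

lemma setOf_add_le_eq_union {S X : Ω → ℝ} (hX : ∀ ω, X ω = 0 ∨ X ω = 1) (s : ℝ) :
    {ω | S ω + X ω ≤ s} =
      ({ω | S ω ≤ s} \ {ω | X ω = 1}) ∪ ({ω | S ω ≤ s - 1} ∩ {ω | X ω = 1}) := by
  ext ω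
  rcases hX ω with h | h <;> simp [h, le_sub_iff_add_le]

variable [MeasurableSpace Ω] {μ : Measure Ω} [IsFiniteMeasure μ] {p : ℝ≥0∞}

/-- With `A₀ = {S ≤ s}`, `A₁ = {S ≤ s - 1}` and `E = {X = 1}`, the left side is `μ {S + X ≤ s}`
(see `setOf_add_le_eq_union`). -/
lemma measure_sdiff_union_inter_le {A₀ A₁ E : Set Ω} (hA₀ : MeasurableSet A₀)
    (hA₁ : MeasurableSet A₁) (hE : MeasurableSet E) (hA : A₁ ⊆ A₀) (hp : p ≤ 1)
    (hcond : p * μ (A₀ \ A₁) ≤ μ ((A₀ \ A₁) ∩ E)) :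
    μ ((A₀ \ E) ∪ (A₁ ∩ E)) ≤ (1 - p) * μ A₀ + p * μ A₁ := by
  set D := (A₀ \ A₁) ∩ E
  have hU : (A₀ \ E) ∪ (A₁ ∩ E) = A₀ \ D := by
    ext ω
    have := @hA ω
    simp only [D, Set.mem_union, Set.mem_sdiff, Set.mem_inter_iff]
    tauto
  have hsplit_U : μ D + μ (A₀ \ D) = μ A₀ := by
    rw [measure_add_sdiff ((hA₀.diff hA₁).inter hE).nullMeasurableSet,
      Set.union_eq_right.2 (Set.inter_subset_left.trans Set.sdiff_subset)]
  have hsplit_A : μ A₁ + μ (A₀ \ A₁) = μ A₀ := by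
    rw [measure_add_sdiff hA₁.nullMeasurableSet, Set.union_eq_right.2 hA]
  rw [hU, ← ENNReal.add_le_add_iff_left (measure_ne_top μ D), hsplit_U]
  calc μ A₀ = p * μ (A₀ \ A₁) + ((1 - p) * μ A₀ + p * μ A₁) := by
        rw [add_left_comm, ← mul_add, add_comm _ (μ A₁), hsplit_A, ← add_mul,
          tsub_add_cancel_of_le hp, one_mul]
    _ ≤ μ D + ((1 - p) * μ A₀ + p * μ A₁) := by gcongr

end SublevelSets

section PartialSum

variable {Ω : Type*} {ℓ : ℕ}

def partialSum (F : Fin ℓ → Ω → ℝ) (n : ℕ) (ω : Ω) : ℝ := ∑ i with i.val < n, F i ω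

lemma partialSum_zero (F : Fin ℓ → Ω → ℝ) (ω : Ω) : partialSum F 0 ω = 0 := by
  simp [partialSum]

lemma partialSum_succ (F : Fin ℓ → Ω → ℝ) {n : ℕ} (hn : n < ℓ) (ω : Ω) :
    partialSum F (n + 1) ω = partialSum F n ω + F ⟨n, hn⟩ ω := by
  have h : Finset.univ.filter (fun i : Fin ℓ => i.val < n + 1) =
      insert ⟨n, hn⟩ (Finset.univ.filter (fun i : Fin ℓ => i.val < n)) := by
    ext i
    simp only [Finset.mem_filter, Finset.mem_univ, true_and, Finset.mem_insert, Fin.ext_iff]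
    omega
  rw [partialSum, h, Finset.sum_insert (by simp), add_comm, partialSum]

lemma partialSum_length (F : Fin ℓ → Ω → ℝ) (ω : Ω) : partialSum F ℓ ω = ∑ i, F i ω := by
  simp [partialSum]

lemma measurable_partialSum {m : MeasurableSpace Ω} {F : Fin ℓ → Ω → ℝ} {n : ℕ}
    (hF : ∀ i : Fin ℓ, i.val < n → Measurable (F i)) : Measurable (partialSum F n) :=
  Finset.measurable_sum _ fun i hi => hF i (Finset.mem_filter.1 hi).2

end PartialSum

section Domination

variable {Ω : Type*} [MeasurableSpace Ω] {μ : Measure Ω} [IsProbabilityMeasure μ] {ℓ : ℕ}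
  {p : ℝ≥0∞}

lemma measure_setOf_partialSum_zero_le {F : Fin ℓ → Ω → ℝ} (s : ℝ) :
    μ {ω | partialSum F 0 ω ≤ s} = binomialCDF p 0 s := by
  by_cases hs : 0 ≤ s <;> simp [partialSum_zero, binomialCDF, hs]

theorem measure_partialSum_le_binomialCDF {F : Fin ℓ → Ω → ℝ} (hp : p ≤ 1)
    (hFm : ∀ j, Measurable (F j)) (hF01 : ∀ j ω, F j ω = 0 ∨ F j ω = 1)
    (hcond : ∀ j : Fin ℓ, ∀ A : Set Ω,
      MeasurableSet[⨆ i : {i : Fin ℓ // i < j}, MeasurableSpace.comap (F i) inferInstance] A →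
      0 < μ A → p * μ A ≤ μ (A ∩ {ω | F j ω = 1})) :
    ∀ n ≤ ℓ, ∀ s, μ {ω | partialSum F n ω ≤ s} ≤ binomialCDF p n s := by
  intro n
  induction n with
  | zero => exact fun _ s => (measure_setOf_partialSum_zero_le s).le
  | succ n ih =>
    intro hn s
    set j : Fin ℓ := ⟨n, hn⟩
    have hpast : Measurable[⨆ i : {i : Fin ℓ // i < j}, MeasurableSpace.comap (F i) inferInstance]
        (partialSum F n) :=
      measurable_partialSum fun i hi =>
        Measurable.of_comap_le (le_iSup_of_le (⟨i, hi⟩ : {i : Fin ℓ // i < j}) le_rfl)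
    set A₀ := {ω | partialSum F n ω ≤ s}
    set A₁ := {ω | partialSum F n ω ≤ s - 1}
    have hcond_step : p * μ (A₀ \ A₁) ≤ μ ((A₀ \ A₁) ∩ {ω | F j ω = 1}) := by
      rcases eq_zero_or_pos (μ (A₀ \ A₁)) with h | h
      · simp [h]
      · exact hcond j _ ((measurableSet_le hpast measurable_const).diff
          (measurableSet_le hpast measurable_const)) h
    have hA : A₁ ⊆ A₀ := fun ω (h : partialSum F n ω ≤ s - 1) =>
      show partialSum F n ω ≤ s by linarith
    have hS_meas : Measurable (partialSum F n) := measurable_partialSum fun i _ => hFm i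
    simp_rw [partialSum_succ F hn]
    rw [setOf_add_le_eq_union (hF01 j)]
    calc _ ≤ (1 - p) * μ A₀ + p * μ A₁ :=
          measure_sdiff_union_inter_le (measurableSet_le hS_meas measurable_const)
            (measurableSet_le hS_meas measurable_const) (hFm j (measurableSet_singleton 1))
            hA hp hcond_step
      _ ≤ binomialCDF p (n + 1) s := by
          rw [binomialCDF]
          gcongr <;> exact ih (Nat.le_of_succ_le hn) _

theorem measure_partialSum_eq_binomialCDF {G : Fin ℓ → Ω → ℝ} (hGm : ∀ i, Measurable (G i))
    (hG01 : ∀ i ω, G i ω = 0 ∨ G i ω = 1) (hGindep : iIndepFun G μ)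
    (hGp : ∀ i, μ {ω | G i ω = 1} = p) :
    ∀ n ≤ ℓ, ∀ s, μ {ω | partialSum G n ω ≤ s} = binomialCDF p n s := by
  intro n
  induction n with
  | zero => exact fun _ s => measure_setOf_partialSum_zero_le s
  | succ n ih =>
    intro hn s
    set j : Fin ℓ := ⟨n, hn⟩
    have hsum_eq : partialSum G n = ∑ i with i.val < n, G i := by
      ext ω
      simp [partialSum]
    have hindep : IndepFun (partialSum G n) (G j) μ :=
      hsum_eq ▸ hGindep.indepFun_finsetSum_of_notMem hGm (by simp [j])
    have hGj1 : MeasurableSet {ω | G j ω = 1} := hGm j (measurableSet_singleton 1)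
    have hmul (t : ℝ) : μ ({ω | partialSum G n ω ≤ t} ∩ {ω | G j ω = 1}) =
        μ {ω | partialSum G n ω ≤ t} * p := by
      rw [← hGp j]
      exact hindep.measure_inter_preimage_eq_mul _ _ measurableSet_Iic (measurableSet_singleton 1)
    have hmul_compl (t : ℝ) : μ ({ω | partialSum G n ω ≤ t} ∩ {ω | G j ω = 1}ᶜ) =
        μ {ω | partialSum G n ω ≤ t} * (1 - p) := by
      rw [← hGp j, ← prob_compl_eq_one_sub hGj1]
      exact hindep.measure_inter_preimage_eq_mul _ _ measurableSet_Iic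
        (measurableSet_singleton 1).compl
    simp_rw [partialSum_succ G hn]
    rw [setOf_add_le_eq_union (hG01 j), measure_union
      (disjoint_sdiff_self_left.mono_right Set.inter_subset_right) ((measurableSet_le
        (measurable_partialSum fun i _ => hGm i) measurable_const).inter hGj1),
      Set.sdiff_eq, hmul_compl, hmul, ih (Nat.le_of_succ_le hn), ih (Nat.le_of_succ_le hn),
      binomialCDF, mul_comm, mul_comm (binomialCDF p n (s - 1))]

end Domination

theorem domination_by_independent_general {Ω Ω' : Type*} [MeasurableSpace Ω] [MeasurableSpace Ω']
    (μ : Measure Ω) (ν : Measure Ω') [IsProbabilityMeasure μ] [IsProbabilityMeasure ν]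
    (ℓ : ℕ) (F : Fin ℓ → Ω → ℝ) (G : Fin ℓ → Ω' → ℝ) (ρ : ℝ)
    (hρ1 : ρ < 1)
    (hFmeas : ∀ j, Measurable (F j))
    (hF01 : ∀ j ω, F j ω = 0 ∨ F j ω = 1)
    (hcond : ∀ j : Fin ℓ, ∀ A : Set Ω,
      MeasurableSet[⨆ i : {i : Fin ℓ // i < j}, MeasurableSpace.comap (F i) inferInstance] A →
      0 < μ A → ENNReal.ofReal ρ * μ A ≤ μ (A ∩ {ω | F j ω = 1}))
    (hGmeas : ∀ i, Measurable (G i))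
    (hG01 : ∀ i ω, G i ω = 0 ∨ G i ω = 1)
    (hGindep : iIndepFun G ν)
    (hGρ : ∀ i, ν {ω | G i ω = 1} = ENNReal.ofReal ρ) :
    ∀ r : ℝ, μ {ω | ∑ i, F i ω ≤ r} ≤ ν {ω | ∑ i, G i ω ≤ r} := by
  intro r
  have hF := measure_partialSum_le_binomialCDF (ENNReal.ofReal_le_one.2 hρ1.le) hFmeas hF01
    hcond ℓ le_rfl r
  have hG := measure_partialSum_eq_binomialCDF hGmeas hG01 hGindep hGρ ℓ le_rfl r
  simp only [partialSum_length] at hF hG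
  exact hF.trans hG.ge

/-- Stochastic domination: if each {0,1}-valued F_j has conditional
probability of being 1, given F₁,...,F_{j-1}, at least ρ, and the G_i are independent
{0,1}-valued with ν(G_i = 1) = ρ, then μ(∑ F_i ≤ r) ≤ ν(∑ G_i ≤ r) for all r. -/
theorem domination_by_independent {Ω Ω' : Type*} [MeasurableSpace Ω] [MeasurableSpace Ω']
    (μ : Measure Ω) (ν : Measure Ω') [IsProbabilityMeasure μ] [IsProbabilityMeasure ν]
    (ℓ : ℕ) (F : Fin ℓ → Ω → ℝ) (G : Fin ℓ → Ω' → ℝ) (ρ : ℝ)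
    (hρ0 : 0 < ρ) (hρ1 : ρ < 1)
    (hFmeas : ∀ j, Measurable (F j))
    (hF01 : ∀ j ω, F j ω = 0 ∨ F j ω = 1)
    (hcond : ∀ j : Fin ℓ, ∀ A : Set Ω,
      MeasurableSet[⨆ i : {i : Fin ℓ // i < j}, MeasurableSpace.comap (F i) inferInstance] A →
      0 < μ A → ENNReal.ofReal ρ * μ A ≤ μ (A ∩ {ω | F j ω = 1}))
    (hGmeas : ∀ i, Measurable (G i))
    (hG01 : ∀ i ω, G i ω = 0 ∨ G i ω = 1)
    (hGindep : iIndepFun G ν)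
    (hGρ : ∀ i, ν {ω | G i ω = 1} = ENNReal.ofReal ρ) :
    ∀ r : ℝ, μ {ω | ∑ i, F i ω ≤ r} ≤ ν {ω | ∑ i, G i ω ≤ r} :=
  domination_by_independent_general μ ν ℓ F G ρ hρ1 hFmeas hF01 hcond hGmeas hG01 hGindep hGρ
end

section
/- Let (Ω,μ) be a probability space, k ∈ ℕ, and (F_j)_{j≥1} a sequence of {0,1}-valued random variables such that there exists ρ ∈ (0,1) with: for every j, the conditional probability that F_j = 1 given F₁,...,F_{j-k} is at least ρ. Then for every ε > 0 there exist constants C₃, C₄ > 0 such that for all ℓ, μ({ω : Σ_{j=1}^ℓ F_j(ω) ≤ (ρ - ε)ℓ}) ≤ C₃ e^{-C₄ ℓ}. -/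
/-!
Split the indices into the residue classes modulo `K = max k 1`. Two indices of one class are at
least `k` apart, so along a class every new variable equals `1` with conditional probability at
least `ρ` given the earlier ones; peeling off the last variable gives
`E[exp (-t S)] ≤ (1 - ρ (1 - e^{-t}))^n` for the sum `S` of `n` variables of a class, and Markov's
inequality turns this into `P(S ≤ (ρ - ε) n) ≤ θ^n` with `θ = (1 - ρ (1 - e^{-t})) e^{t (ρ - ε)}`.
At `t = 0` this `θ` equals `1` and has derivative `-ε`, so `θ < 1` for a small `t > 0`.
If the whole sum is at most `(ρ - ε) ℓ`, then so is the sum over some class relative to its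
length, and every class has at least `ℓ / K` elements.
-/

open MeasureTheory Finset Real ENNReal

theorem mul_lintegral_le_setLIntegral_of_mul_le_measure_inter {Ω : Type*}
    {m m0 : MeasurableSpace Ω} (hm : m ≤ m0) {μ : Measure Ω} {B : Set Ω} {c : ℝ≥0∞}
    (h : ∀ A, MeasurableSet[m] A → c * μ A ≤ μ (A ∩ B)) {f : Ω → ℝ≥0∞}
    (hf : Measurable[m] f) :
    c * ∫⁻ ω, f ω ∂μ ≤ ∫⁻ ω in B, f ω ∂μ := by
  have hle : (c • μ).trim hm ≤ (μ.restrict B).trim hm := by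
    refine Measure.le_iff.2 fun A hA => ?_
    rw [trim_measurableSet_eq hm hA, trim_measurableSet_eq hm hA, Measure.smul_apply,
      smul_eq_mul, Measure.restrict_apply (hm A hA)]
    exact h A hA
  calc c * ∫⁻ ω, f ω ∂μ = ∫⁻ ω, f ω ∂(c • μ).trim hm := by
        rw [lintegral_trim hm hf, lintegral_smul_measure, smul_eq_mul]
    _ ≤ ∫⁻ ω, f ω ∂(μ.restrict B).trim hm := lintegral_mono' hle le_rfl
    _ = ∫⁻ ω in B, f ω ∂μ := lintegral_trim (μ := μ.restrict B) hm hf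

theorem ENNReal.ofReal_mul_add_le_of_ofReal_mul_add_le {a b : ℝ≥0∞} (ha : a ≠ ∞)
    (hb : b ≠ ∞) {ρ s : ℝ} (hρ0 : 0 ≤ ρ) (hρ1 : ρ ≤ 1) (hs0 : 0 ≤ s) (hs1 : s ≤ 1)
    (h : ENNReal.ofReal ρ * (a + b) ≤ a) :
    ENNReal.ofReal s * a + b ≤ ENNReal.ofReal (1 - ρ * (1 - s)) * (a + b) := by
  lift a to NNReal using ha
  lift b to NNReal using hb
  rw [← ENNReal.ofReal_coe_nnreal (p := a), ← ENNReal.ofReal_coe_nnreal (p := b),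
    ← ENNReal.ofReal_add (by positivity) (by positivity), ← ENNReal.ofReal_mul hρ0,
    ENNReal.ofReal_le_ofReal_iff (by positivity)] at h
  rw [← ENNReal.ofReal_coe_nnreal (p := a), ← ENNReal.ofReal_coe_nnreal (p := b),
    ← ENNReal.ofReal_mul hs0, ← ENNReal.ofReal_add (by positivity) (by positivity),
    ← ENNReal.ofReal_add (by positivity) (by positivity), ← ENNReal.ofReal_mul (by nlinarith)]
  apply ENNReal.ofReal_le_ofReal
  nlinarith [a.2, b.2]

theorem exists_pos_mul_exp_lt_one (ρ : ℝ) {ε : ℝ} (hε : 0 < ε) :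
    ∃ t > 0, (1 - ρ * (1 - exp (-t))) * exp (t * (ρ - ε)) < 1 := by
  set f : ℝ → ℝ := fun t => (1 - ρ * (1 - exp (-t))) * exp (t * (ρ - ε))
  have hf : HasDerivAt f (-ε) 0 := by
    have := ((((hasDerivAt_neg 0).exp.const_sub 1).const_mul ρ).const_sub 1).mul
      ((hasDerivAt_mul_const (ρ - ε)).exp)
    exact this.congr_deriv (by simp; ring)
  obtain ⟨t, hslope, ht⟩ := ((hf.tendsto_slope_zero_right.eventually
    (gt_mem_nhds (neg_lt_zero.2 hε))).and self_mem_nhdsWithin).exists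
  refine ⟨t, ht, ?_⟩
  have : f t < f 0 := by
    simpa [smul_eq_mul, inv_mul_lt_iff₀ (show (0:ℝ) < t from ht)] using hslope
  simpa [f] using this

theorem Nat.div_le_card_filter_mod_eq {k r : ℕ} (hr : r < k) (ℓ : ℕ) :
    ℓ / k ≤ #{j ∈ range ℓ | j % k = r} := by
  have := Nat.count_modEq_card (b := ℓ) (by omega : 0 < k) r
  rw [Nat.count_eq_card_filter_range] at this
  simp only [Nat.ModEq, Nat.mod_eq_of_lt hr] at this
  omega

theorem Nat.add_le_of_mod_eq_of_lt {n i j : ℕ} (h : i % n = j % n) (hij : i < j) :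
    i + n ≤ j := by
  have := (Nat.modEq_iff_dvd' hij.le).1 h
  have := Nat.le_of_dvd (by omega) this
  omega

theorem pow_div_le_inv_mul_exp {θ : ℝ} (h0 : 0 < θ) (h1 : θ ≤ 1) {k : ℕ} (hk : 0 < k)
    (ℓ : ℕ) :
    θ ^ (ℓ / k) ≤ θ⁻¹ * exp (log θ / k * ℓ) := by
  have hℓ : (ℓ : ℝ) / k ≤ (ℓ / k + 1 : ℕ) := by
    rw [div_le_iff₀ (by positivity)]
    exact_mod_cast (add_one_mul (ℓ / k) k ▸ (Nat.lt_div_mul_add (a := ℓ) hk).le)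
  rw [le_inv_mul_iff₀ h0, ← pow_succ', ← exp_log (pow_pos h0 _), Real.log_pow, exp_le_exp,
    div_mul_eq_mul_div, mul_div_assoc, mul_comm]
  exact mul_le_mul_of_nonpos_left hℓ (log_nonpos h0.le h1)

theorem Finset.exists_sum_fiber_le_mul_card {ι κ : Type*} [DecidableEq κ] {s : Finset ι}
    {t : Finset κ} (ht : t.Nonempty) {g : ι → κ} (hg : ∀ i ∈ s, g i ∈ t) {f : ι → ℝ} {c : ℝ}
    (h : ∑ i ∈ s, f i ≤ c * #s) :
    ∃ r ∈ t, ∑ i ∈ s with g i = r, f i ≤ c * #{i ∈ s | g i = r} := by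
  rw [← sum_fiberwise_of_maps_to hg, card_eq_sum_card_fiberwise hg, Nat.cast_sum, mul_sum] at h
  exact exists_le_of_sum_le ht h

theorem lintegral_mul_exp_neg_mul_le {Ω : Type*} {m m0 : MeasurableSpace Ω} (hm : m ≤ m0)
    {μ : Measure Ω} {X : Ω → ℝ} (hX : Measurable X) (hX01 : ∀ ω, X ω = 0 ∨ X ω = 1)
    {ρ : ℝ} (hρ0 : 0 ≤ ρ) (hρ1 : ρ ≤ 1)
    (hcond : ∀ A, MeasurableSet[m] A → ENNReal.ofReal ρ * μ A ≤ μ (A ∩ {ω | X ω = 1}))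
    {t : ℝ} (ht : 0 ≤ t) {f : Ω → ℝ≥0∞} (hf : Measurable[m] f) (hfi : ∫⁻ ω, f ω ∂μ ≠ ∞) :
    ∫⁻ ω, f ω * ENNReal.ofReal (exp (-t * X ω)) ∂μ
      ≤ ENNReal.ofReal (1 - ρ * (1 - exp (-t))) * ∫⁻ ω, f ω ∂μ := by
  set B := {ω | X ω = 1}
  have hB : MeasurableSet B := hX (measurableSet_singleton 1)
  have hsplit : ∫⁻ ω, f ω * ENNReal.ofReal (exp (-t * X ω)) ∂μ
      = ENNReal.ofReal (exp (-t)) * ∫⁻ ω in B, f ω ∂μ + ∫⁻ ω in Bᶜ, f ω ∂μ := by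
    rw [← lintegral_add_compl _ hB, ← lintegral_const_mul' _ _ ofReal_ne_top]
    congr 1
    · refine setLIntegral_congr_fun hB fun ω (hω : X ω = 1) => ?_
      rw [hω, mul_one, mul_comm]
    · refine setLIntegral_congr_fun hB.compl fun ω (hω : X ω ≠ 1) => ?_
      rw [(hX01 ω).resolve_right hω, mul_zero, exp_zero, ENNReal.ofReal_one, mul_one]
  have hρ : ENNReal.ofReal ρ * (∫⁻ ω in B, f ω ∂μ + ∫⁻ ω in Bᶜ, f ω ∂μ)
      ≤ ∫⁻ ω in B, f ω ∂μ := by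
    rw [lintegral_add_compl _ hB]
    exact mul_lintegral_le_setLIntegral_of_mul_le_measure_inter hm hcond hf
  rw [hsplit, ← lintegral_add_compl (μ := μ) f hB]
  exact ENNReal.ofReal_mul_add_le_of_ofReal_mul_add_le
    (ne_top_of_le_ne_top hfi (setLIntegral_le_lintegral _ _))
    (ne_top_of_le_ne_top hfi (setLIntegral_le_lintegral _ _)) hρ0 hρ1 (exp_pos _).le
    (exp_le_one_iff.2 (neg_nonpos.2 ht)) hρ

section GapCondition

variable {Ω : Type*} [m0 : MeasurableSpace Ω] {μ : Measure Ω} {X : ℕ → Ω → ℝ}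
  {m : ℕ → MeasurableSpace Ω} {ρ t : ℝ}

theorem lintegral_exp_neg_mul_sum_le [IsProbabilityMeasure μ] (hm : ∀ j, m j ≤ m0)
    (hX : ∀ j, Measurable (X j)) (hX01 : ∀ j ω, X j ω = 0 ∨ X j ω = 1)
    (hρ0 : 0 ≤ ρ) (hρ1 : ρ ≤ 1)
    (hcond : ∀ j A, MeasurableSet[m j] A → ENNReal.ofReal ρ * μ A ≤ μ (A ∩ {ω | X j ω = 1}))
    (ht : 0 ≤ t) (s : Finset ℕ) (hs : ∀ i ∈ s, ∀ j ∈ s, i < j → Measurable[m j] (X i)) :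
    ∫⁻ ω, ENNReal.ofReal (exp (-t * ∑ i ∈ s, X i ω)) ∂μ
      ≤ ENNReal.ofReal (1 - ρ * (1 - exp (-t))) ^ #s := by
  induction s using Finset.induction_on_max with
  | empty => simp
  | insert a s hlt ih =>
    have ha : a ∉ s := fun h => (hlt a h).false
    have ih := ih fun i hi j hj hij => hs i (mem_insert_of_mem hi) j (mem_insert_of_mem hj) hij
    set f := fun ω => ENNReal.ofReal (exp (-t * ∑ i ∈ s, X i ω))
    have hmeas : Measurable[m a] f :=
      ENNReal.measurable_ofReal.comp <| measurable_exp.comp <| measurable_const.mul <|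
        Finset.measurable_sum _ fun i hi =>
          hs i (mem_insert_of_mem hi) a (mem_insert_self a s) (hlt i hi)
    calc ∫⁻ ω, ENNReal.ofReal (exp (-t * ∑ i ∈ insert a s, X i ω)) ∂μ
        = ∫⁻ ω, f ω * ENNReal.ofReal (exp (-t * X a ω)) ∂μ := by
          refine lintegral_congr fun ω => ?_
          rw [sum_insert ha, ← ENNReal.ofReal_mul (exp_pos _).le, ← exp_add]
          ring_nf
      _ ≤ ENNReal.ofReal (1 - ρ * (1 - exp (-t))) * ∫⁻ ω, f ω ∂μ :=
          lintegral_mul_exp_neg_mul_le (hm a) (hX a) (hX01 a) hρ0 hρ1 (hcond a) ht hmeas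
            (ne_top_of_le_ne_top (pow_ne_top ofReal_ne_top) ih)
      _ ≤ ENNReal.ofReal (1 - ρ * (1 - exp (-t))) ^ #(insert a s) := by
          rw [card_insert_of_notMem ha, pow_succ']
          gcongr

theorem measure_sum_le_mul_card_le [IsProbabilityMeasure μ] (hm : ∀ j, m j ≤ m0)
    (hX : ∀ j, Measurable (X j)) (hX01 : ∀ j ω, X j ω = 0 ∨ X j ω = 1)
    (hρ0 : 0 ≤ ρ) (hρ1 : ρ ≤ 1)
    (hcond : ∀ j A, MeasurableSet[m j] A → ENNReal.ofReal ρ * μ A ≤ μ (A ∩ {ω | X j ω = 1}))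
    (ht : 0 ≤ t) (c : ℝ) (s : Finset ℕ)
    (hs : ∀ i ∈ s, ∀ j ∈ s, i < j → Measurable[m j] (X i)) :
    μ {ω | ∑ i ∈ s, X i ω ≤ c * #s}
      ≤ ENNReal.ofReal (((1 - ρ * (1 - exp (-t))) * exp (t * c)) ^ #s) := by
  set S := fun ω => ∑ i ∈ s, X i ω
  have hq : 0 ≤ 1 - ρ * (1 - exp (-t)) := by nlinarith [exp_pos (-t)]
  have hsub : {ω | S ω ≤ c * #s}
      ⊆ {ω | ENNReal.ofReal (exp (-t * (c * #s))) ≤ ENNReal.ofReal (exp (-t * S ω))} :=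
    fun ω hω => ENNReal.ofReal_le_ofReal <| exp_le_exp.2 <| by
      nlinarith [show S ω ≤ c * #s from hω]
  calc μ {ω | S ω ≤ c * #s}
      = ENNReal.ofReal (exp (t * (c * #s)))
          * (ENNReal.ofReal (exp (-t * (c * #s))) * μ {ω | S ω ≤ c * #s}) := by
        rw [← mul_assoc, ← ENNReal.ofReal_mul (exp_pos _).le, ← exp_add]
        simp
    _ ≤ ENNReal.ofReal (exp (t * (c * #s))) * ∫⁻ ω, ENNReal.ofReal (exp (-t * S ω)) ∂μ := by
        gcongr
        exact (mul_le_mul_right (measure_mono hsub) _).trans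
          (mul_meas_ge_le_lintegral₀ (by fun_prop) _)
    _ ≤ ENNReal.ofReal (exp (t * (c * #s)))
          * ENNReal.ofReal (1 - ρ * (1 - exp (-t))) ^ #s := by
        gcongr
        exact lintegral_exp_neg_mul_sum_le hm hX hX01 hρ0 hρ1 hcond ht s hs
    _ = ENNReal.ofReal (((1 - ρ * (1 - exp (-t))) * exp (t * c)) ^ #s) := by
        rw [← ENNReal.ofReal_pow hq, ← ENNReal.ofReal_mul (exp_pos _).le, mul_pow,
          ← exp_nat_mul, mul_comm]
        ring_nf

theorem measure_sum_range_le_mul_le [IsProbabilityMeasure μ] (hm : ∀ j, m j ≤ m0)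
    (hX : ∀ j, Measurable (X j)) (hX01 : ∀ j ω, X j ω = 0 ∨ X j ω = 1)
    (hρ0 : 0 ≤ ρ) (hρ1 : ρ ≤ 1)
    (hcond : ∀ j A, MeasurableSet[m j] A → ENNReal.ofReal ρ * μ A ≤ μ (A ∩ {ω | X j ω = 1}))
    (ht : 0 ≤ t) {k K : ℕ} (hadapted : ∀ i j, i + k ≤ j → Measurable[m j] (X i))
    (hkK : k ≤ K) (hK : 0 < K) {c : ℝ} (hθ : (1 - ρ * (1 - exp (-t))) * exp (t * c) ≤ 1)
    (ℓ : ℕ) :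
    μ {ω | ∑ j ∈ range ℓ, X j ω ≤ c * ℓ}
      ≤ K * ENNReal.ofReal (((1 - ρ * (1 - exp (-t))) * exp (t * c)) ^ (ℓ / K)) := by
  set θ := (1 - ρ * (1 - exp (-t))) * exp (t * c)
  have hθ0 : 0 ≤ θ := mul_nonneg (by nlinarith [exp_pos (-t)]) (exp_pos _).le
  have hsep : ∀ r, ∀ i ∈ {j ∈ range ℓ | j % K = r}, ∀ j ∈ {j ∈ range ℓ | j % K = r},
      i < j → Measurable[m j] (X i) := fun r i hi j hj hij =>
    hadapted i j <| (Nat.add_le_add_left hkK i).trans <|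
      Nat.add_le_of_mod_eq_of_lt ((mem_filter.1 hi).2.trans (mem_filter.1 hj).2.symm) hij
  calc μ {ω | ∑ j ∈ range ℓ, X j ω ≤ c * ℓ}
      ≤ μ (⋃ r ∈ range K, {ω | ∑ j ∈ range ℓ with j % K = r, X j ω
          ≤ c * #{j ∈ range ℓ | j % K = r}}) := by
        refine measure_mono fun ω hω => ?_
        simpa using exists_sum_fiber_le_mul_card (nonempty_range_iff.2 hK.ne')
          (fun j _ => mem_range.2 (Nat.mod_lt j hK)) (by simpa using hω)
    _ ≤ ∑ r ∈ range K, ENNReal.ofReal (θ ^ (ℓ / K)) :=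
        (measure_biUnion_finset_le _ _).trans <| sum_le_sum fun r hr =>
          (measure_sum_le_mul_card_le hm hX hX01 hρ0 hρ1 hcond ht c _ (hsep r)).trans <|
            ENNReal.ofReal_le_ofReal <|
              pow_le_pow_of_le_one hθ0 hθ (Nat.div_le_card_filter_mod_eq (mem_range.1 hr) ℓ)
    _ = K * ENNReal.ofReal (θ ^ (ℓ / K)) := by rw [sum_const, card_range, nsmul_eq_mul]

end GapCondition

/-- Large deviations with a gap: if the conditional probability that F_j = 1
given F₁,...,F_{j-k} is at least ρ, then for every ε > 0 there are C₃, C₄ > 0 with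
μ(∑_{j<ℓ} F_j ≤ (ρ-ε)ℓ) ≤ C₃ e^{-C₄ ℓ} for all ℓ. -/
theorem large_deviations_gap {Ω : Type*} [MeasurableSpace Ω]
    (μ : Measure Ω) [IsProbabilityMeasure μ] (k : ℕ)
    (F : ℕ → Ω → ℝ) (ρ : ℝ) (hρ0 : 0 < ρ) (hρ1 : ρ < 1)
    (hFmeas : ∀ j, Measurable (F j))
    (hF01 : ∀ j ω, F j ω = 0 ∨ F j ω = 1)
    (hcond : ∀ j : ℕ, ∀ A : Set Ω,
      MeasurableSet[⨆ i : {i : ℕ // i + k ≤ j}, MeasurableSpace.comap (F i) inferInstance] A →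
      0 < μ A → ENNReal.ofReal ρ * μ A ≤ μ (A ∩ {ω | F j ω = 1})) :
    ∀ ε > (0 : ℝ), ∃ C₃ > (0 : ℝ), ∃ C₄ > (0 : ℝ), ∀ ℓ : ℕ,
      μ {ω | ∑ j ∈ Finset.range ℓ, F j ω ≤ (ρ - ε) * ℓ}
        ≤ ENNReal.ofReal (C₃ * Real.exp (-C₄ * ℓ)) := by
  intro ε hε
  obtain ⟨t, ht, hθ1⟩ := exists_pos_mul_exp_lt_one ρ hε
  set θ := (1 - ρ * (1 - exp (-t))) * exp (t * (ρ - ε))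
  have hθ0 : 0 < θ := mul_pos (by nlinarith [exp_pos (-t), exp_lt_one_iff.2 (neg_lt_zero.2 ht)])
    (exp_pos _)
  have hK : 0 < max k 1 := by omega
  have hbound := measure_sum_range_le_mul_le
    (m := fun j => ⨆ i : {i : ℕ // i + k ≤ j}, MeasurableSpace.comap (F i) inferInstance)
    (fun j => iSup_le fun i => (hFmeas i).comap_le) hFmeas hF01 hρ0.le hρ1.le
    (fun j A hA => (eq_or_ne (μ A) 0).elim (fun h => by simp [h])
      fun h => hcond j A hA (pos_iff_ne_zero.2 h))
    ht.le (fun i j hij => Measurable.of_comap_le (le_iSup_of_le ⟨i, hij⟩ le_rfl))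
    (le_max_left k 1) hK hθ1.le
  refine ⟨max k 1 * θ⁻¹, by positivity, -log θ / max k 1,
    div_pos (neg_pos.2 (log_neg hθ0 hθ1)) (by positivity), fun ℓ => (hbound ℓ).trans ?_⟩
  rw [← ENNReal.ofReal_natCast, ← ENNReal.ofReal_mul (by positivity), neg_div, neg_neg,
    mul_assoc]
  exact ENNReal.ofReal_le_ofReal (by gcongr; exact pow_div_le_inv_mul_exp hθ0 hθ1.le hK ℓ)
end

section
/- Let V be an inner product space, v, v⊥ ∈ V nonzero orthogonal vectors, λ, ε, L > 0 with λ(1-ε) < λ - ε̃ for some ε̃ < ε/2, and let A : V → W be linear with ‖A‖ ≤ e^L, ‖A v‖ ≥ e^{(λ-ε̃)L}‖v‖. Suppose u = a v + b v⊥ with |a| ≥ (1-ε̂)‖u‖/(2‖v‖) and |b| ≤ 2ε̂ ‖u‖/‖v⊥‖, where ε̂ < e^{-L} e^{(λ-ε̃)L}/8 and ε̂ < 1/2, and suppose e^{εL/2} ≥ 8. Then ‖A u‖ ≥ e^{(λ-ε)L} ‖u‖. -/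
open scoped RealInnerProductSpace

/-- Quantitative angle-perturbation estimate: if A expands the reference vector
v by at least e^{(λ-ε̃)L}, ‖A‖ ≤ e^L, and u = a·v + b·v⊥ makes a small angle ε̂ with v
(quantified via |a| ≥ (1-ε̂)‖u‖/(2‖v‖), |b| ≤ 2ε̂‖u‖/‖v⊥‖, ε̂ < e^{-L}e^{(λ-ε̃)L}/8,
ε̂ < 1/2), with ε̃ < ε/2, λ(1-ε) < λ-ε̃, and e^{εL/2} ≥ 8, then ‖Au‖ ≥ e^{(λ-ε)L}‖u‖. -/
theorem angle_perturbation_growth {V W : Type*}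
    [NormedAddCommGroup V] [InnerProductSpace ℝ V] [NormedAddCommGroup W] [NormedSpace ℝ W]
    (A : V →L[ℝ] W) (v vperp u : V) (a b lam eps epst epsh L : ℝ)
    (hv : v ≠ 0) (hvp : vperp ≠ 0) (horth : ⟪v, vperp⟫ = 0)
    (hlam : 0 < lam) (heps : 0 < eps) (hL : 0 < L)
    (hepst : epst < eps / 2)
    (hepst2 : lam * (1 - eps) < lam - epst)
    (hAop : ∀ w, ‖A w‖ ≤ Real.exp L * ‖w‖)
    (hAv : Real.exp ((lam - epst) * L) * ‖v‖ ≤ ‖A v‖)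
    (hepsh0 : 0 ≤ epsh)
    (hepsh1 : epsh < Real.exp (-L) * Real.exp ((lam - epst) * L) / 8)
    (hepsh2 : epsh < 1 / 2)
    (hbig : 8 ≤ Real.exp (eps * L / 2))
    (hu : u = a • v + b • vperp)
    (ha : (1 - epsh) * ‖u‖ / (2 * ‖v‖) ≤ |a|)
    (hb : |b| ≤ 2 * epsh * ‖u‖ / ‖vperp‖) :
    Real.exp ((lam - eps) * L) * ‖u‖ ≤ ‖A u‖ := by
  have hvn : (0:ℝ) < ‖v‖ := norm_pos_iff.mpr hv
  have hvpn : (0:ℝ) < ‖vperp‖ := norm_pos_iff.mpr hvp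
  have hun : (0:ℝ) ≤ ‖u‖ := norm_nonneg u
  set X := Real.exp ((lam - epst) * L) with hXdef
  have hXpos : (0:ℝ) < X := Real.exp_pos _
  have heL : (0:ℝ) < Real.exp L := Real.exp_pos _
  -- X ≤ e^L
  have hXle : X ≤ Real.exp L := by
    have h1 := hAop v
    nlinarith [hAv]
  -- 8 ε̂ e^L ≤ X
  have h8 : 8 * epsh * Real.exp L ≤ X := by
    have h := mul_lt_mul_of_pos_right hepsh1 heL
    have h2 : Real.exp (-L) * X / 8 * Real.exp L = X / 8 := by
      rw [Real.exp_neg]; field_simp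
    rw [h2] at h
    linarith
  -- ε̂ ≤ 1/8
  have hepsh18 : epsh ≤ 1/8 := by nlinarith
  -- e^{(λ-ε)L} ≤ X/8
  have hsmall : Real.exp ((lam - eps) * L) ≤ X / 8 := by
    have h1 : (lam - eps) * L = (lam - epst) * L + (epst - eps) * L := by ring
    rw [h1, Real.exp_add]
    have h2 : Real.exp ((epst - eps) * L) ≤ 1/8 := by
      have h3 : (epst - eps) * L ≤ -(eps * L / 2) := by nlinarith
      have h4 : Real.exp ((epst - eps) * L) ≤ Real.exp (-(eps * L / 2)) :=
        Real.exp_le_exp.mpr h3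
      rw [Real.exp_neg] at h4
      have h5 : (Real.exp (eps * L / 2))⁻¹ ≤ 1/8 := by
        rw [inv_le_comm₀ (by positivity) (by norm_num)]
        simpa using hbig
      linarith
    nlinarith [Real.exp_pos ((epst - eps) * L)]
  -- clear divisions in ha, hb
  have ha' : (1 - epsh) * ‖u‖ ≤ 2 * ‖v‖ * |a| := by
    have := (div_le_iff₀ (by positivity : (0:ℝ) < 2 * ‖v‖)).mp ha
    linarith
  have hb' : |b| * ‖vperp‖ ≤ 2 * epsh * ‖u‖ := by
    have := (le_div_iff₀ hvpn).mp hb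
    linarith
  -- norm lower bound: ‖Au‖ ≥ |a|‖Av‖ - |b|‖Avperp‖
  have hAu : |a| * ‖A v‖ - |b| * ‖A vperp‖ ≤ ‖A u‖ := by
    have h1 : A u = a • A v + b • A vperp := by
      rw [hu]; simp [map_add, map_smul]
    have h3 : a • A v = A u + (-(b • A vperp)) := by rw [h1]; abel
    have h2 : ‖a • A v‖ ≤ ‖A u‖ + ‖b • A vperp‖ := by
      calc ‖a • A v‖ = ‖A u + (-(b • A vperp))‖ := by rw [h3]
        _ ≤ ‖A u‖ + ‖-(b • A vperp)‖ := norm_add_le _ _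
        _ = ‖A u‖ + ‖b • A vperp‖ := by rw [norm_neg]
    rw [norm_smul, Real.norm_eq_abs] at h2
    have h4 : ‖b • A vperp‖ = |b| * ‖A vperp‖ := by
      rw [norm_smul, Real.norm_eq_abs]
    rw [h4] at h2
    linarith
  -- bounds for the two terms
  have hav : (1 - epsh) * ‖u‖ / 2 ≤ |a| * ‖v‖ := by linarith
  have hterm1 : (1 - epsh) * ‖u‖ / 2 * X ≤ |a| * ‖A v‖ := by
    calc (1 - epsh) * ‖u‖ / 2 * X ≤ (|a| * ‖v‖) * X :=
          mul_le_mul_of_nonneg_right hav hXpos.le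
      _ = |a| * (X * ‖v‖) := by ring
      _ ≤ |a| * ‖A v‖ := mul_le_mul_of_nonneg_left hAv (abs_nonneg a)
  have hterm2 : |b| * ‖A vperp‖ ≤ Real.exp L * (2 * epsh * ‖u‖) := by
    calc |b| * ‖A vperp‖ ≤ |b| * (Real.exp L * ‖vperp‖) :=
          mul_le_mul_of_nonneg_left (hAop vperp) (abs_nonneg b)
      _ = Real.exp L * (|b| * ‖vperp‖) := by ring
      _ ≤ Real.exp L * (2 * epsh * ‖u‖) := mul_le_mul_of_nonneg_left hb' heL.le
  -- coefficient inequality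
  have h9 : epsh * X ≤ X / 8 := by
    have := mul_le_mul_of_nonneg_right hepsh18 hXpos.le
    linarith
  have hcoef : Real.exp ((lam - eps) * L) ≤ (1 - epsh) * X / 2 - 2 * epsh * Real.exp L := by
    linarith [h9, h8, hsmall]
  -- final combination
  calc Real.exp ((lam - eps) * L) * ‖u‖
      ≤ ((1 - epsh) * X / 2 - 2 * epsh * Real.exp L) * ‖u‖ :=
        mul_le_mul_of_nonneg_right hcoef hun
    _ = (1 - epsh) * ‖u‖ / 2 * X - Real.exp L * (2 * epsh * ‖u‖) := by ring
    _ ≤ |a| * ‖A v‖ - |b| * ‖A vperp‖ := by linarith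
    _ ≤ ‖A u‖ := hAu
end

section
/- Let λ > 0 and let μ be a compactly supported probability measure on SL(2,ℝ) such that for μ^ℕ-almost every sequence ḡ = (g₁,g₂,...) there exists θ̄(ḡ) ∈ ℝ with lim_{n→∞} (1/n) log ‖(g_{λn} r_{θ̄})(g_n⋯g₁)^{-1}‖ = 0, where the distribution of θ̄ is uniform on the circle. Then, using the decomposition r_θ = ĥ_{tanθ} g_{log cosθ} h_{-tanθ} valid for θ ∉ {±π/2}, for μ^ℕ-a.e. ḡ there exists s̄(ḡ) ∈ ℝ with lim_{n→∞} (1/n) log ‖(g_{λn} h_{s̄})(g_n⋯g₁)^{-1}‖ = 0, and the distribution of s̄ is in the measure class of Lebesgue measure on ℝ. -/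
open MeasureTheory ProbabilityTheory

/-- Matrices over ℝ carry the Borel (product) measurable structure. -/
instance matrixMeasurableSpace : MeasurableSpace (Matrix (Fin 2) (Fin 2) ℝ) :=
  MeasurableSpace.pi (m := fun _ : Fin 2 => MeasurableSpace.pi)

/-- An auxiliary matrix norm on 2×2 real matrices (the statement holds for any matrix norm). -/
noncomputable def mnorm (A : Matrix (Fin 2) (Fin 2) ℝ) : ℝ := ∑ i, ∑ j, |A i j|

/-- Teichmüller geodesic flow matrix g_t = diag(e^t, e^{-t}). -/
noncomputable def gmat (t : ℝ) : Matrix (Fin 2) (Fin 2) ℝ := !![Real.exp t, 0; 0, Real.exp (-t)]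

/-- Horocycle matrix h_s = [[1,s],[0,1]]. -/
def hmat (s : ℝ) : Matrix (Fin 2) (Fin 2) ℝ := !![1, s; 0, 1]

/-- Rotation matrix r_θ. -/
noncomputable def rotmat (θ : ℝ) : Matrix (Fin 2) (Fin 2) ℝ :=
  !![Real.cos θ, -Real.sin θ; Real.sin θ, Real.cos θ]

/-- The reversed product g_n ⋯ g_1 (here indexed from 0: G_{n-1} ⋯ G_0). -/
def revProd {Ω M : Type*} [Monoid M] (G : ℕ → Ω → M) (n : ℕ) (ω : Ω) : M :=
  (((List.range n).reverse).map fun i => G i ω).prod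

/-!
Writing `r_θ = ĥ_{tan θ} · diag(cos θ, sec θ) · h_{-tan θ}` and conjugating the first two
factors by `g_T` gives `g_T r_θ = L_T · g_T h_{-tan θ}`, where `L_T` is lower triangular of
determinant one and, for `T ≥ 0`, bounded in terms of `θ` alone, as is its inverse, the
adjugate. Hence the two log-norms differ by `O(1)` and `s̄ = -tan θ̄` tracks whenever `θ̄` does,
as `cos θ̄ ≠ 0` almost surely. Since `tan` is a local diffeomorphism with countably many
branches, it maps Lebesgue-null sets to null sets in both directions, which puts the law of `s̄`
in the Lebesgue class.
-/

open Real Filter Topology Set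

lemma mnorm_nonneg (A : Matrix (Fin 2) (Fin 2) ℝ) : 0 ≤ mnorm A := by
  unfold mnorm; positivity

lemma mnorm_mul_le (A B : Matrix (Fin 2) (Fin 2) ℝ) : mnorm (A * B) ≤ mnorm A * mnorm B := by
  calc mnorm (A * B) = ∑ i, ∑ j, |∑ k, A i k * B k j| := rfl
    _ ≤ ∑ i, ∑ j, ∑ k, |A i k| * |B k j| := by
        gcongr with i _ j _
        exact (Finset.abs_sum_le_sum_abs (fun k => A i k * B k j) _).trans_eq
          (by simp only [abs_mul])
    _ = ∑ i, ∑ k, |A i k| * ∑ j, |B k j| := by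
        simp_rw [Finset.mul_sum]
        exact Finset.sum_congr rfl fun i _ => Finset.sum_comm
    _ ≤ ∑ i, ∑ k, |A i k| * mnorm B := by
        gcongr with i _ k _
        exact Finset.single_le_sum (f := fun k => ∑ j, |B k j|) (fun _ _ => by positivity)
          (Finset.mem_univ k)
    _ = mnorm A * mnorm B := by simp only [mnorm, Finset.sum_mul]

lemma mnorm_adjugate (A : Matrix (Fin 2) (Fin 2) ℝ) : mnorm A.adjugate = mnorm A := by
  simp only [mnorm, Matrix.adjugate_fin_two, Fin.sum_univ_two, Matrix.of_apply, Matrix.cons_val',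
    Matrix.cons_val_zero, Matrix.cons_val_one, Matrix.empty_val', Matrix.cons_val_fin_one, abs_neg]
  ring

lemma mnorm_le_mnorm_mul_mnorm_mul {L : Matrix (Fin 2) (Fin 2) ℝ} (hL : L.det = 1)
    (A : Matrix (Fin 2) (Fin 2) ℝ) : mnorm A ≤ mnorm L * mnorm (L * A) :=
  calc mnorm A = mnorm (L.adjugate * (L * A)) := by
        rw [← mul_assoc, Matrix.adjugate_mul, hL, one_smul, one_mul]
    _ ≤ mnorm L * mnorm (L * A) := mnorm_adjugate L ▸ mnorm_mul_le _ _

/-- `L_T = g_T ĥ_{tan θ} diag(cos θ, sec θ) g_{-T}`. -/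
noncomputable def rotationCorrection (θ T : ℝ) : Matrix (Fin 2) (Fin 2) ℝ :=
  !![cos θ, 0; sin θ * exp (-(2 * T)), (cos θ)⁻¹]

lemma det_rotationCorrection {θ : ℝ} (hc : cos θ ≠ 0) (T : ℝ) :
    (rotationCorrection θ T).det = 1 := by
  simp [rotationCorrection, Matrix.det_fin_two_of, hc]

lemma gmat_mul_rotmat {θ : ℝ} (hc : cos θ ≠ 0) (T : ℝ) :
    gmat T * rotmat θ = rotationCorrection θ T * (gmat T * hmat (-tan θ)) := by
  have he : exp (-(2 * T)) * exp T = exp (-T) := by rw [← exp_add]; ring_nf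
  ext i j
  fin_cases i <;> fin_cases j <;>
    simp [gmat, hmat, rotmat, rotationCorrection, Matrix.mul_apply, Fin.sum_univ_two,
      tan_eq_sin_div_cos]
  · ring
  · field_simp
  · linear_combination (-sin θ) * he
  · generalize exp (-(2 * T)) = E at he ⊢
    field_simp
    linear_combination (sin θ ^ 2) * he + exp (-T) * sin_sq_add_cos_sq θ

lemma mnorm_rotationCorrection_le (θ : ℝ) {T : ℝ} (hT : 0 ≤ T) :
    mnorm (rotationCorrection θ T) ≤ |cos θ| + |sin θ| + |cos θ|⁻¹ := by
  have hE : exp (-(2 * T)) ≤ 1 := exp_le_one_iff.mpr (by linarith)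
  simp only [mnorm, rotationCorrection, Fin.sum_univ_two, Matrix.of_apply, Matrix.cons_val',
    Matrix.cons_val_zero, Matrix.cons_val_one, Matrix.empty_val', Matrix.cons_val_fin_one,
    abs_zero, add_zero, abs_mul, abs_exp, abs_inv]
  nlinarith [abs_nonneg (sin θ)]

lemma abs_log_sub_log_le_of_le_mul {x y C : ℝ} (hx : 0 ≤ x) (hy : 0 ≤ y) (hxy : x ≤ C * y)
    (hyx : y ≤ C * x) : |log x - log y| ≤ |log C| := by
  rcases hy.eq_or_lt with rfl | hy
  · simp [le_antisymm (by simpa using hxy) hx]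
  have hx : 0 < x := by
    by_contra! h
    nlinarith [le_antisymm h hx]
  have hC : 0 < C := pos_of_mul_pos_left (hx.trans_le hxy) hy.le
  have h₁ : log x ≤ log C + log y := by rw [← log_mul hC.ne' hy.ne']; exact log_le_log hx hxy
  have h₂ : log y ≤ log C + log x := by rw [← log_mul hC.ne' hx.ne']; exact log_le_log hy hyx
  exact (abs_sub_le_iff.mpr ⟨by linarith, by linarith⟩).trans (le_abs_self _)

lemma tendsto_inv_mul_log_of_le_mul {x y : ℕ → ℝ} {C : ℝ} (hx : ∀ n, 0 ≤ x n) (hy : ∀ n, 0 ≤ y n)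
    (hxy : ∀ n, x n ≤ C * y n) (hyx : ∀ n, y n ≤ C * x n)
    (h : Tendsto (fun n : ℕ => (n : ℝ)⁻¹ * log (y n)) atTop (𝓝 0)) :
    Tendsto (fun n : ℕ => (n : ℝ)⁻¹ * log (x n)) atTop (𝓝 0) := by
  refine h.congr_dist (squeeze_zero (fun _ => dist_nonneg) (fun n => ?_)
    (by simpa using (tendsto_inv_atTop_nhds_zero_nat (𝕜 := ℝ)).mul_const |log C|))
  rw [Real.dist_eq, ← mul_sub, abs_mul, abs_inv, Nat.abs_cast, abs_sub_comm]
  exact mul_le_mul_of_nonneg_left (abs_log_sub_log_le_of_le_mul (hx n) (hy n) (hxy n) (hyx n))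
    (by positivity)

theorem tendsto_log_mnorm_hmat_of_rotmat {lam θ : ℝ} (hlam : 0 ≤ lam) (hc : cos θ ≠ 0)
    (A : ℕ → Matrix (Fin 2) (Fin 2) ℝ)
    (h : Tendsto (fun n : ℕ => (n : ℝ)⁻¹ * log (mnorm (gmat (lam * n) * rotmat θ * A n)))
      atTop (𝓝 0)) :
    Tendsto (fun n : ℕ => (n : ℝ)⁻¹ * log (mnorm (gmat (lam * n) * hmat (-tan θ) * A n)))
      atTop (𝓝 0) := by
  set C := |cos θ| + |sin θ| + |cos θ|⁻¹
  have hL : ∀ n : ℕ, mnorm (rotationCorrection θ (lam * n)) ≤ C := fun n =>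
    mnorm_rotationCorrection_le θ (by positivity)
  have hrot : ∀ n : ℕ, gmat (lam * n) * rotmat θ * A n
      = rotationCorrection θ (lam * n) * (gmat (lam * n) * hmat (-tan θ) * A n) := fun n => by
    simp only [gmat_mul_rotmat hc, mul_assoc]
  refine tendsto_inv_mul_log_of_le_mul (C := C) (fun _ => mnorm_nonneg _)
    (fun _ => mnorm_nonneg _) (fun n => ?_) (fun n => ?_) h
  · calc _ ≤ mnorm (rotationCorrection θ (lam * n))
            * mnorm (rotationCorrection θ (lam * n) * (gmat (lam * n) * hmat (-tan θ) * A n)) :=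
          mnorm_le_mnorm_mul_mnorm_mul (det_rotationCorrection hc _) _
      _ ≤ C * mnorm (gmat (lam * n) * rotmat θ * A n) := by
          rw [← hrot]; exact mul_le_mul_of_nonneg_right (hL n) (mnorm_nonneg _)
  · rw [hrot]
    exact (mnorm_mul_le _ _).trans (mul_le_mul_of_nonneg_right (hL n) (mnorm_nonneg _))

lemma measurable_tan : Measurable tan := by
  rw [show tan = fun x => sin x / cos x from funext tan_eq_sin_div_cos]
  fun_prop

lemma volume_setOf_cos_eq_zero : volume {θ : ℝ | cos θ = 0} = 0 := by
  refine measure_mono_null (fun θ hθ => ?_)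
    ((countable_range fun k : ℤ => (2 * k + 1) * π / 2).measure_zero _)
  obtain ⟨k, hk⟩ := cos_eq_zero_iff.mp hθ
  exact ⟨k, hk.symm⟩

lemma exists_int_arctan_tan_eq {θ : ℝ} (hc : cos θ ≠ 0) : ∃ k : ℤ, arctan (tan θ) = θ - k * π := by
  set k := toIocDiv pi_pos (-(π / 2)) θ
  have hmem := toIocMod_mem_Ioc pi_pos (-(π / 2)) θ
  rw [← self_sub_toIocDiv_zsmul, zsmul_eq_mul] at hmem
  refine ⟨k, ?_⟩
  have hlt : θ - k * π < π / 2 := by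
    refine (hmem.2.trans_eq (by ring)).lt_of_ne fun h => hc ?_
    rw [show θ = π / 2 + k * π by linarith, cos_add_int_mul_pi]
    simp
  rw [← tan_periodic.sub_int_mul_eq k, arctan_tan hmem.1 hlt]

lemma volume_preimage_tan_eq_zero {E : Set ℝ} (hE : volume E = 0) : volume (tan ⁻¹' E) = 0 := by
  have hsub : tan ⁻¹' E ⊆ {θ | cos θ = 0} ∪ ⋃ k : ℤ, (fun x => arctan x + k * π) '' E := by
    intro θ hθ
    by_cases hc : cos θ = 0
    · exact Or.inl hc
    obtain ⟨k, hk⟩ := exists_int_arctan_tan_eq hc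
    exact Or.inr (mem_iUnion.mpr ⟨k, tan θ, hθ, by simp only [hk]; ring⟩)
  refine measure_mono_null hsub (measure_union_null volume_setOf_cos_eq_zero
    (measure_iUnion_null fun k => ?_))
  exact addHaar_image_eq_zero_of_differentiableOn_of_addHaar_eq_zero volume
    (differentiable_arctan.add_const _).differentiableOn hE

lemma volume_eq_zero_of_volume_preimage_tan_inter_eq_zero {E : Set ℝ}
    (hE : volume (tan ⁻¹' E ∩ Ioo (π / 2) (3 * π / 2)) = 0) : volume E = 0 := by
  have himage : E ⊆ tan '' (tan ⁻¹' E ∩ Ioo (π / 2) (3 * π / 2)) := by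
    intro x hx
    have htan : tan (arctan x + π) = x := by rw [tan_add_pi, tan_arctan]
    refine ⟨arctan x + π, ⟨by rwa [mem_preimage, htan], ?_, ?_⟩, htan⟩
    · linarith [neg_pi_div_two_lt_arctan x]
    · linarith [arctan_lt_pi_div_two x]
  refine measure_mono_null himage
    (addHaar_image_eq_zero_of_differentiableOn_of_addHaar_eq_zero volume (fun θ hθ => ?_) hE)
  refine (differentiableAt_tan.mpr fun hc => ?_).differentiableWithinAt
  obtain ⟨k, hk⟩ := cos_eq_zero_iff.mp hc
  have h₁ := hθ.2.1
  have h₂ := hθ.2.2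
  rw [hk] at h₁ h₂
  have : (0 : ℝ) < k := by nlinarith [pi_pos]
  have : (k : ℝ) < 1 := by nlinarith [pi_pos]
  norm_cast at *
  omega

lemma measurable_neg_tan : Measurable fun θ => -tan θ := measurable_tan.neg

lemma absolutelyContinuous_map_neg_tan {ν : Measure ℝ} (hν : ν ≪ volume) :
    ν.map (fun θ => -tan θ) ≪ volume := by
  refine Measure.AbsolutelyContinuous.mk fun E hE hE0 => ?_
  rw [Measure.map_apply measurable_neg_tan hE]
  refine hν (volume_preimage_tan_eq_zero (E := -E) ?_)
  rwa [Measure.measure_neg]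

lemma volume_absolutelyContinuous_map_neg_tan_restrict :
    volume ≪ (volume.restrict (Ico 0 (2 * π))).map (fun θ => -tan θ) := by
  refine Measure.AbsolutelyContinuous.mk fun E hE hE0 => ?_
  rw [Measure.map_apply measurable_neg_tan hE, Measure.restrict_apply (measurable_neg_tan hE)]
    at hE0
  rw [← Measure.measure_neg]
  refine volume_eq_zero_of_volume_preimage_tan_inter_eq_zero (measure_mono_null ?_ hE0)
  exact inter_subset_inter (fun θ hθ => by simpa using hθ) (Ioo_subset_Ico_self.trans
    (Ico_subset_Ico (by positivity) (by linarith [pi_pos])))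

theorem sublinear_tracking_horocycle_general {Ω : Type*} [MeasurableSpace Ω]
    (P : Measure Ω)
    (G : ℕ → Ω → Matrix (Fin 2) (Fin 2) ℝ)
    (lam : ℝ) (hlam : 0 < lam)
    (θbar : Ω → ℝ) (hθmeas : Measurable θbar)
    (htrack : ∀ᵐ ω ∂P, Filter.Tendsto (fun n : ℕ =>
        (n : ℝ)⁻¹ * Real.log (mnorm (gmat (lam * n) * rotmat (θbar ω) * (revProd G n ω)⁻¹)))
        Filter.atTop (nhds 0))
    (huniform : Measure.map θbar P
        = (ENNReal.ofReal (2 * Real.pi))⁻¹ • volume.restrict (Set.Ico 0 (2 * Real.pi))) :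
    ∃ sbar : Ω → ℝ, Measurable sbar ∧
      (∀ᵐ ω ∂P, Filter.Tendsto (fun n : ℕ =>
          (n : ℝ)⁻¹ * Real.log (mnorm (gmat (lam * n) * hmat (sbar ω) * (revProd G n ω)⁻¹)))
          Filter.atTop (nhds 0))
      ∧ Measure.map sbar P ≪ volume ∧ (volume : Measure ℝ) ≪ Measure.map sbar P := by
  have hθac : P.map θbar ≪ volume :=
    huniform ▸ (Measure.absolutelyContinuous_of_le Measure.restrict_le_self).smul_left _
  have hcos : ∀ᵐ ω ∂P, cos (θbar ω) ≠ 0 :=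
    ae_of_ae_map hθmeas.aemeasurable
      (hθac.ae_le (measure_eq_zero_iff_ae_notMem.mp volume_setOf_cos_eq_zero))
  have hmap : P.map (fun ω => -tan (θbar ω)) = (P.map θbar).map fun θ => -tan θ :=
    (Measure.map_map measurable_neg_tan hθmeas).symm
  refine ⟨fun ω => -tan (θbar ω), measurable_neg_tan.comp hθmeas, ?_, ?_, ?_⟩
  · filter_upwards [htrack, hcos] with ω hω hc
    exact tendsto_log_mnorm_hmat_of_rotmat hlam.le hc _ hω
  · exact hmap ▸ absolutelyContinuous_map_neg_tan hθac
  · rw [hmap, huniform, Measure.map_smul]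
    exact volume_absolutelyContinuous_map_neg_tan_restrict.smul_right
      (ENNReal.inv_ne_zero.mpr ENNReal.ofReal_ne_top)

/-- Sublinear tracking along horocycles: if for an i.i.d. μ-random walk
(g_n) on SL(2,ℝ) (μ compactly supported) there is, for a.e. sample path, an angle θ̄ with
(1/n) log ‖g_{λn} r_{θ̄} (g_n⋯g_1)^{-1}‖ → 0 and θ̄ uniformly distributed, then there is
s̄ with (1/n) log ‖g_{λn} h_{s̄} (g_n⋯g_1)^{-1}‖ → 0 for a.e. path, and the distribution of
s̄ is in the measure class of Lebesgue measure on ℝ. -/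
theorem sublinear_tracking_horocycle {Ω : Type*} [MeasurableSpace Ω]
    (P : Measure Ω) [IsProbabilityMeasure P]
    (μ : Measure (Matrix (Fin 2) (Fin 2) ℝ)) [IsProbabilityMeasure μ]
    (hcompact : ∃ K : Set (Matrix (Fin 2) (Fin 2) ℝ), IsCompact K ∧ μ Kᶜ = 0)
    (hdet : μ {A : Matrix (Fin 2) (Fin 2) ℝ | A.det = 1}ᶜ = 0)
    (G : ℕ → Ω → Matrix (Fin 2) (Fin 2) ℝ)
    (hGmeas : ∀ n, Measurable (G n))
    (hGdet : ∀ n ω, (G n ω).det = 1)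
    (hGiid : iIndepFun G P)
    (hGlaw : ∀ n, Measure.map (G n) P = μ)
    (lam : ℝ) (hlam : 0 < lam)
    (θbar : Ω → ℝ) (hθmeas : Measurable θbar)
    (htrack : ∀ᵐ ω ∂P, Filter.Tendsto (fun n : ℕ =>
        (n : ℝ)⁻¹ * Real.log (mnorm (gmat (lam * n) * rotmat (θbar ω) * (revProd G n ω)⁻¹)))
        Filter.atTop (nhds 0))
    (huniform : Measure.map θbar P
        = (ENNReal.ofReal (2 * Real.pi))⁻¹ • volume.restrict (Set.Ico 0 (2 * Real.pi))) :
    ∃ sbar : Ω → ℝ, Measurable sbar ∧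
      (∀ᵐ ω ∂P, Filter.Tendsto (fun n : ℕ =>
          (n : ℝ)⁻¹ * Real.log (mnorm (gmat (lam * n) * hmat (sbar ω) * (revProd G n ω)⁻¹)))
          Filter.atTop (nhds 0))
      ∧ Measure.map sbar P ≪ volume ∧ (volume : Measure ℝ) ≪ Measure.map sbar P :=
  sublinear_tracking_horocycle_general P G lam hlam θbar hθmeas htrack huniform
end

section
/- Let 𝒦 be a subset of a stratum of translation surfaces on which the Hodge length of the shortest nonzero integral cohomology class is at least 10γ'' > 0, and suppose the Kontsevich–Zorich cocycle acts isometrically (in Hodge norm) on a subbundle E₀. Suppose ω is a translation surface, t₀ > 0, z is an integral class at g_{t₀}ω with v := KZ(g_{t₀},ω)(α[Im ω]) - z ∈ E₀ and 0 < |v| < γ''. Then for all t ≥ t₀ with g_t ω ∈ 𝒦, ‖KZ(g_t,ω)(α[Im ω])‖_ℤ = |v| ≠ 0, i.e. the Hodge distance of KZ(g_t,ω)(α[Im ω]) from the integer lattice equals |v|. -/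
/-- If the Kontsevich–Zorich cocycle preserves the integer lattice, acts
isometrically on a subbundle E₀, the lattice has injectivity radius ≥ 10γ'' over 𝒦, and
v = KZ(g_{t₀},ω)(α[Im ω]) - z ∈ E₀ with 0 < |v| < γ'' for some integral class z, then for
all t ≥ t₀ with g_t ω ∈ 𝒦 the Hodge distance of KZ(g_t,ω)(α[Im ω]) to the integer lattice
equals |v|, and in particular is nonzero. -/
theorem isometric_subbundle_distance_constant {X V : Type*}
    [NormedAddCommGroup V] [NormedSpace ℝ V]
    (g : ℝ → X → X) (KZ : ℝ → X → V →ₗ[ℝ] V)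
    (hflow : ∀ s t ω, g (s + t) ω = g s (g t ω))
    (hcoc : ∀ s t ω, KZ (s + t) ω = (KZ s (g t ω)).comp (KZ t ω))
    (Λ : X → AddSubgroup V)
    (hlat : ∀ t ω z, z ∈ Λ ω → KZ t ω z ∈ Λ (g t ω))
    (E : X → Submodule ℝ V)
    (hEinv : ∀ t ω u, u ∈ E ω → KZ t ω u ∈ E (g t ω))
    (hEiso : ∀ t ω u, u ∈ E ω → ‖KZ t ω u‖ = ‖u‖)
    (𝒦 : Set X) (γ'' : ℝ) (hγ : 0 < γ'')
    (hsep : ∀ x ∈ 𝒦, ∀ z ∈ Λ x, z ≠ 0 → 10 * γ'' ≤ ‖z‖)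
    (ω : X) (t₀ : ℝ) (ht₀ : 0 < t₀) (w z : V) (hz : z ∈ Λ (g t₀ ω))
    (hvE : KZ t₀ ω w - z ∈ E (g t₀ ω))
    (hv0 : 0 < ‖KZ t₀ ω w - z‖) (hvγ : ‖KZ t₀ ω w - z‖ < γ'') :
    ∀ t, t₀ ≤ t → g t ω ∈ 𝒦 →
      Metric.infDist (KZ t ω w) (Λ (g t ω) : Set V) = ‖KZ t₀ ω w - z‖ ∧
      Metric.infDist (KZ t ω w) (Λ (g t ω) : Set V) ≠ 0 := by
  intro t ht hK
  set v := KZ t₀ ω w - z with hv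
  have hst : (t - t₀) + t₀ = t := by ring
  have hg : g t ω = g (t - t₀) (g t₀ ω) := by
    have h := hflow (t - t₀) t₀ ω; rwa [hst] at h
  have hKZ : KZ t ω w = KZ (t - t₀) (g t₀ ω) (KZ t₀ ω w) := by
    have h := hcoc (t - t₀) t₀ ω; rw [hst] at h; rw [h]; rfl
  set z' := KZ (t - t₀) (g t₀ ω) z with hz'
  have hz'mem : z' ∈ Λ (g t ω) := hg ▸ hlat (t - t₀) (g t₀ ω) z hz
  have hdiff : KZ t ω w - z' = KZ (t - t₀) (g t₀ ω) v := by
    rw [hKZ, hz', hv, map_sub]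
  have hnorm : ‖KZ t ω w - z'‖ = ‖v‖ := by
    rw [hdiff]; exact hEiso _ _ v hvE
  have hle : Metric.infDist (KZ t ω w) (Λ (g t ω) : Set V) ≤ ‖v‖ := by
    have h := Metric.infDist_le_dist_of_mem (x := KZ t ω w) hz'mem
    rwa [dist_eq_norm, hnorm] at h
  have hge : ‖v‖ ≤ Metric.infDist (KZ t ω w) (Λ (g t ω) : Set V) := by
    by_contra hcon
    push_neg at hcon
    obtain ⟨y, hy, hdy⟩ := (Metric.infDist_lt_iff ⟨z', hz'mem⟩).1 hcon
    rw [dist_eq_norm] at hdy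
    rcases eq_or_ne y z' with rfl | hne
    · exact absurd hdy (by rw [hnorm]; exact lt_irrefl _)
    · have hzy : z' - y ∈ Λ (g t ω) := sub_mem hz'mem hy
      have hzy0 : z' - y ≠ 0 := sub_ne_zero.mpr (Ne.symm hne)
      have hsep' := hsep _ hK _ hzy hzy0
      have htri : ‖z' - y‖ ≤ ‖z' - KZ t ω w‖ + ‖KZ t ω w - y‖ :=
        norm_sub_le_norm_sub_add_norm_sub _ _ _
      have hrev : ‖z' - KZ t ω w‖ = ‖v‖ := by rw [norm_sub_rev, hnorm]
      linarith
  have heq : Metric.infDist (KZ t ω w) (Λ (g t ω) : Set V) = ‖v‖ := le_antisymm hle hge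
  exact ⟨heq, by rw [heq]; exact hv0.ne'⟩
end

section
/- Let (g_t) be a flow on a space X, 𝒦 ⊂ X, and ω ∈ X such that the set {t > 0 : g_t ω ∈ 𝒦} has upper density at least 3/4 in ℝ₊. Then for every ℓ₀ > 0 there exist ℓ > ℓ₀ and a sequence t_i → ∞ such that for all i, all three points g_{t_i}ω, g_{t_i − ℓ}ω, and g_{t_i + ℓ}ω belong to 𝒦. -/
/-!
If no `t > T` has `t - ℓ`, `t`, `t + ℓ` all in `A`, then every `t ∈ (T, S]` lies in one of
the three translates `Aᶜ + ℓ`, `Aᶜ`, `Aᶜ - ℓ`, so `|Aᶜ ∩ (0, S]| ≥ (S - T - ℓ) / 3`. Hence `A`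
has upper density at most `2 / 3`.
-/

open MeasureTheory Set Filter

noncomputable def upperDensity (A : Set ℝ) : ℝ :=
  limsup (fun S => volume.real (Ioc 0 S ∩ A) / S) atTop

variable {A B : Set ℝ} {a b c ℓ T S : ℝ}

theorem volume_Ioc_inter_preimage_add_le (h : 0 ≤ a + c) :
    volume (Ioc a b ∩ (· + c) ⁻¹' B) ≤ volume (Ioc 0 b ∩ B) + ENNReal.ofReal c := by
  have hshift : Ioc a b ∩ (· + c) ⁻¹' B = (· + c) ⁻¹' (Ioc (a + c) (b + c) ∩ B) := by
    simp [preimage_inter]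
  calc volume (Ioc a b ∩ (· + c) ⁻¹' B) = volume (Ioc (a + c) (b + c) ∩ B) := by
        rw [hshift, measure_preimage_add_right]
    _ ≤ volume ((Ioc 0 b ∩ B) ∪ Ioc b (b + c)) := by
        refine measure_mono fun t ⟨⟨ht₁, ht₂⟩, htB⟩ => ?_
        rcases le_or_gt t b with htb | htb
        exacts [Or.inl ⟨⟨by linarith, htb⟩, htB⟩, Or.inr ⟨htb, ht₂⟩]
    _ ≤ volume (Ioc 0 b ∩ B) + ENNReal.ofReal c := by
        simpa [Real.volume_Ioc] using
          measure_union_le (μ := volume) (Ioc 0 b ∩ B) (Ioc b (b + c))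

theorem volume_Ioc_le_three_mul_volume_inter_add (hℓ : 0 ≤ ℓ) (hℓT : ℓ ≤ T)
    (h : ∀ t ∈ Ioc T S, t - ℓ ∈ B ∨ t ∈ B ∨ t + ℓ ∈ B) :
    volume (Ioc T S) ≤ 3 * volume (Ioc 0 S ∩ B) + ENNReal.ofReal ℓ := by
  set I := Ioc T S
  have hcover :
      I ⊆ (I ∩ (· + -ℓ) ⁻¹' B) ∪ (I ∩ (· + 0) ⁻¹' B) ∪ (I ∩ (· + ℓ) ⁻¹' B) := by
    intro t ht
    simpa [ht, ← sub_eq_add_neg, or_assoc] using h t ht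
  calc volume I
      ≤ volume (I ∩ (· + -ℓ) ⁻¹' B) + volume (I ∩ (· + 0) ⁻¹' B)
          + volume (I ∩ (· + ℓ) ⁻¹' B) :=
        (measure_mono hcover).trans <|
          (measure_union_le _ _).trans <| add_le_add_left (measure_union_le _ _) _
    _ ≤ (volume (Ioc 0 S ∩ B) + ENNReal.ofReal (-ℓ))
          + (volume (Ioc 0 S ∩ B) + ENNReal.ofReal 0)
          + (volume (Ioc 0 S ∩ B) + ENNReal.ofReal ℓ) := by
        gcongr <;> exact volume_Ioc_inter_preimage_add_le (by linarith)
    _ = 3 * volume (Ioc 0 S ∩ B) + ENNReal.ofReal ℓ := by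
        rw [ENNReal.ofReal_of_nonpos (by linarith), ENNReal.ofReal_zero]
        ring

theorem measureReal_Ioc_inter_le (hA : MeasurableSet A) (hℓ : 0 ≤ ℓ) (hℓT : ℓ ≤ T)
    (hTS : T ≤ S) (h : ∀ t > T, ¬ (t ∈ A ∧ t - ℓ ∈ A ∧ t + ℓ ∈ A)) :
    volume.real (Ioc 0 S ∩ A) ≤ (2 * S + T + ℓ) / 3 := by
  have hcover := volume_Ioc_le_three_mul_volume_inter_add (S := S) (B := Aᶜ) hℓ hℓT
    fun t ht => by have := h t ht.1; simp only [mem_compl_iff]; tauto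
  have hsplit : volume.real (Ioc 0 S ∩ A) + volume.real (Ioc 0 S ∩ Aᶜ) = S := by
    rw [← sdiff_eq, measureReal_inter_add_sdiff hA measure_Ioc_lt_top.ne,
      Real.volume_real_Ioc_of_le (by linarith), sub_zero]
  have hcompl : S - T ≤ 3 * volume.real (Ioc 0 S ∩ Aᶜ) + ℓ := by
    have hfin : volume (Ioc 0 S ∩ Aᶜ) ≠ ⊤ :=
      measure_ne_top_of_subset inter_subset_left measure_Ioc_lt_top.ne
    have := ENNReal.toReal_mono (by finiteness) hcover
    rwa [ENNReal.toReal_add (by finiteness) (by finiteness), ENNReal.toReal_mul,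
      ENNReal.toReal_ofReal hℓ, ← measureReal_def, ← measureReal_def,
      Real.volume_real_Ioc_of_le hTS] at this
  linarith

theorem upperDensity_le_two_thirds (hA : MeasurableSet A) (hℓ : 0 ≤ ℓ)
    (h : ∀ t > T, ¬ (t ∈ A ∧ t - ℓ ∈ A ∧ t + ℓ ∈ A)) :
    upperDensity A ≤ 2 / 3 := by
  set T' := max T ℓ
  have hbound : ∀ᶠ S in atTop,
      volume.real (Ioc 0 S ∩ A) / S ≤ 2 / 3 + (T' + ℓ) / 3 * S⁻¹ := by
    filter_upwards [eventually_ge_atTop T', eventually_gt_atTop 0] with S hS hS₀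
    rw [div_le_iff₀ hS₀, add_mul, mul_assoc, inv_mul_cancel₀ hS₀.ne']
    have := measureReal_Ioc_inter_le hA hℓ (le_max_right T ℓ) hS
      fun t ht => h t ((le_max_left T ℓ).trans_lt ht)
    linarith
  have hlim : Tendsto (fun S : ℝ => 2 / 3 + (T' + ℓ) / 3 * S⁻¹) atTop (nhds (2 / 3)) := by
    simpa using tendsto_const_nhds.add (tendsto_inv_atTop_zero.const_mul ((T' + ℓ) / 3))
  have hcobdd : IsCoboundedUnder (· ≤ ·) atTop fun S => volume.real (Ioc 0 S ∩ A) / S :=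
    isCoboundedUnder_le_of_eventually_le atTop (x := 0) <|
      (eventually_ge_atTop 0).mono fun S hS => by positivity
  exact hlim.limsup_eq ▸ limsup_le_limsup hbound hcobdd hlim.isBoundedUnder_le

theorem exists_progression_of_two_thirds_lt_upperDensity (hA : MeasurableSet A)
    (hdens : 2 / 3 < upperDensity A) (hℓ : 0 ≤ ℓ) (T : ℝ) :
    ∃ t > T, t ∈ A ∧ t - ℓ ∈ A ∧ t + ℓ ∈ A := by
  by_contra h
  exact hdens.not_ge <| upperDensity_le_two_thirds hA hℓ fun t ht hmem => h ⟨t, ht, hmem⟩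

/-- If the measurable set of times {t > 0 : g_t ω ∈ 𝒦} has upper density at
least 3/4, then for every ℓ₀ > 0 there are ℓ > ℓ₀ and arbitrarily large times t such that
g_t ω, g_{t-ℓ} ω and g_{t+ℓ} ω all lie in 𝒦. -/
theorem three_term_progression_of_upper_density {X : Type*}
    (g : ℝ → X → X) (𝒦 : Set X) (ω : X)
    (hmeas : MeasurableSet {t : ℝ | g t ω ∈ 𝒦})
    (hdens : (3 / 4 : ℝ) ≤ Filter.limsup
      (fun S : ℝ => (volume {t : ℝ | t ∈ Set.Ioc 0 S ∧ g t ω ∈ 𝒦}).toReal / S)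
      Filter.atTop) :
    ∀ ℓ₀ > (0 : ℝ), ∃ ℓ > ℓ₀, ∀ T : ℝ, ∃ t > T,
      g t ω ∈ 𝒦 ∧ g (t - ℓ) ω ∈ 𝒦 ∧ g (t + ℓ) ω ∈ 𝒦 := by
  have hdens' : 2 / 3 < upperDensity {t | g t ω ∈ 𝒦} := lt_of_lt_of_le (by norm_num) hdens
  intro ℓ₀ hℓ₀
  exact ⟨ℓ₀ + 1, by linarith,
    exists_progression_of_two_thirds_lt_upperDensity hmeas hdens' (by linarith)⟩
end
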